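/- Let G be a locally compact second-countable group acting jointly measurably on a measurable space X. Let τ be a σ-finite G-invariant measure on X (that is, τ(g⁻¹ • A) = τ(A) for every g ∈ G and every measurable A, where g⁻¹ • A = {x ∈ X : g • x ∈ A}), and let ν be a SAT probability measure on X such that ν and τ are mutually absolutely continuous. Then ν is purely atomic: every measurable set A ⊆ X with ν(A) > 0 contains a measurable subset B with ν(B) > 0 such that every measurable C ⊆ B satisfies ν(C) = 0 or ν(C) = ν(B). -/

import Mathlib

open MeasureTheory Filter
open scoped ENNReal NNReal

/-- Convolution of a measure on the acting group with a measure on the space: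
the pushforward of the product measure under the action map. -/
noncomputable def convAct {G X : Type*} [MeasurableSpace G] [MeasurableSpace X] [SMul G X]
    (μ : Measure G) (ν : Measure X) : Measure X :=
  Measure.map (fun p : G × X => p.1 • p.2) (μ.prod ν)

/-- Total variation distance between two (finite) measures, as the supremum over
measurable sets of the absolute difference of the measures. -/
noncomputable def tvDist {X : Type*} [MeasurableSpace X] (ν₁ ν₂ : Measure X) : ℝ :=
  ⨆ A : {A : Set X // MeasurableSet A}, |(ν₁ A.1).toReal - (ν₂ A.1).toReal|

/-- A probability measure `ν` on a `G`-space `X` is strongly approximately transitive (SAT)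
if every probability measure absolutely continuous with respect to `ν` can be approximated
in total variation by convolutions `μ ∗ ν` with `μ` a probability measure on `G`. -/
def IsSAT (G : Type*) {X : Type*} [MeasurableSpace G] [MeasurableSpace X] [SMul G X]
    (ν : Measure X) : Prop :=
  ∀ lam : Measure X, IsProbabilityMeasure lam → lam ≪ ν →
    ∀ ε : ℝ, 0 < ε → ∃ μ : Measure G, IsProbabilityMeasure μ ∧ tvDist lam (convAct μ ν) < ε

lemma abs_sub_le_tvDist {X : Type*} [MeasurableSpace X] (ν₁ ν₂ : Measure X)
    [IsFiniteMeasure ν₁] [IsFiniteMeasure ν₂] {A : Set X} (hA : MeasurableSet A) :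
    |(ν₁ A).toReal - (ν₂ A).toReal| ≤ tvDist ν₁ ν₂ := by
  have hbdd : BddAbove (Set.range fun S : {S : Set X // MeasurableSet S} =>
      |(ν₁ S.1).toReal - (ν₂ S.1).toReal|) := by
    refine ⟨(ν₁ Set.univ).toReal + (ν₂ Set.univ).toReal, ?_⟩
    rintro r ⟨S, rfl⟩
    have h1 : (ν₁ S.1).toReal ≤ (ν₁ Set.univ).toReal :=
      ENNReal.toReal_mono (measure_ne_top _ _) (measure_mono (Set.subset_univ _))
    have h2 : (ν₂ S.1).toReal ≤ (ν₂ Set.univ).toReal :=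
      ENNReal.toReal_mono (measure_ne_top _ _) (measure_mono (Set.subset_univ _))
    have h3 : (0:ℝ) ≤ (ν₁ S.1).toReal := ENNReal.toReal_nonneg
    have h4 : (0:ℝ) ≤ (ν₂ S.1).toReal := ENNReal.toReal_nonneg
    rw [abs_sub_le_iff]
    constructor <;> linarith
  exact le_ciSup hbdd ⟨A, hA⟩

/-- if `X` carries a σ-finite `G`-invariant measure `τ` and a SAT probability
measure `ν` equivalent to `τ`, then `ν` is purely atomic. -/
theorem stmt1
    {G X : Type*}
    [TopologicalSpace G] [Group G] [IsTopologicalGroup G]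
    [LocallyCompactSpace G] [SecondCountableTopology G]
    [MeasurableSpace G] [BorelSpace G]
    [MeasurableSpace X] [MulAction G X]
    (hact : Measurable fun q : G × X => q.1 • q.2)
    (τ : Measure X) [SigmaFinite τ]
    (hinv : ∀ (g : G) (A : Set X), MeasurableSet A → τ ((fun x => g • x) ⁻¹' A) = τ A)
    (ν : Measure X) [IsProbabilityMeasure ν]
    (hSAT : IsSAT G ν)
    (hac₁ : ν ≪ τ) (hac₂ : τ ≪ ν) :
    ∀ A : Set X, MeasurableSet A → 0 < ν A →
      ∃ B : Set X, B ⊆ A ∧ MeasurableSet B ∧ 0 < ν B ∧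
        ∀ C : Set X, C ⊆ B → MeasurableSet C → ν C = 0 ∨ ν C = ν B := by
  intro A hA hApos
  by_contra hcon
  push_neg at hcon
  -- splitting step
  have hsplit : ∀ B, B ⊆ A → MeasurableSet B → 0 < ν B → τ B ≠ ∞ →
      ∃ C, C ⊆ B ∧ MeasurableSet C ∧ 0 < ν C ∧ τ C ≤ τ B / 2 := by
    intro B hBA hB hνB hτB
    obtain ⟨C, hCB, hC, hC0, hCne⟩ := hcon B hBA hB hνB
    have hClt : ν C < ν B := lt_of_le_of_ne (measure_mono hCB) hCne
    have hdiff : 0 < ν (B \ C) := by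
      rcases eq_or_ne (ν (B \ C)) 0 with h | h
      · exfalso
        have hle : ν B ≤ ν C + ν (B \ C) := by
          calc ν B = ν (C ∪ B \ C) := by rw [Set.union_diff_cancel hCB]
          _ ≤ ν C + ν (B \ C) := measure_union_le _ _
        rw [h, add_zero] at hle
        exact absurd hle (not_le.2 hClt)
      · exact h.bot_lt
    have hsum : τ C + τ (B \ C) = τ B := by
      rw [← measure_union disjoint_sdiff_self_right (hB.diff hC), Set.union_diff_cancel hCB]
    by_cases hle : τ C ≤ τ B / 2
    · exact ⟨C, hCB, hC, pos_iff_ne_zero.mpr hC0, hle⟩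
    · refine ⟨B \ C, Set.diff_subset, hB.diff hC, hdiff, ?_⟩
      have hhalf : τ B / 2 + τ B / 2 = τ B := ENNReal.add_halves _
      have hkey : τ B / 2 + τ (B \ C) ≤ τ C + τ (B \ C) :=
        add_le_add_left (not_le.1 hle).le _
      have hne : τ B / 2 ≠ ∞ := (ENNReal.div_lt_top hτB two_ne_zero).ne
      exact (ENNReal.add_le_add_iff_left hne).1
        (hkey.trans_eq (hsum.trans hhalf.symm))
  -- a starting set of finite τ-measure and positive ν-measure
  obtain ⟨n₀, hn₀⟩ : ∃ n, ν (A ∩ MeasureTheory.spanningSets τ n) ≠ 0 := by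
    by_contra h
    push_neg at h
    have hsub : A ⊆ ⋃ n, A ∩ MeasureTheory.spanningSets τ n := by
      rw [← Set.inter_iUnion, MeasureTheory.iUnion_spanningSets, Set.inter_univ]
    exact absurd (measure_mono_null hsub (measure_iUnion_null h)) hApos.ne'
  set B₀ : Set X := A ∩ MeasureTheory.spanningSets τ n₀ with hB₀def
  have hB₀A : B₀ ⊆ A := Set.inter_subset_left
  have hB₀m : MeasurableSet B₀ := hA.inter (MeasureTheory.measurableSet_spanningSets τ n₀)
  have hB₀pos : 0 < ν B₀ := pos_iff_ne_zero.mpr hn₀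
  have hB₀fin : τ B₀ ≠ ∞ :=
    ((measure_mono Set.inter_subset_right).trans_lt
      (MeasureTheory.measure_spanningSets_lt_top τ n₀)).ne
  -- iterated halving
  have hseq : ∀ k : ℕ, ∃ B, B ⊆ A ∧ MeasurableSet B ∧ 0 < ν B ∧ τ B ≤ τ B₀ * 2⁻¹ ^ k := by
    intro k
    induction k with
    | zero => exact ⟨B₀, hB₀A, hB₀m, hB₀pos, by simp⟩
    | succ k ih =>
      obtain ⟨B, h1, h2, h3, h4⟩ := ih
      have hfin : τ B ≠ ∞ := by
        refine (h4.trans_lt ?_).ne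
        exact ENNReal.mul_lt_top (lt_top_iff_ne_top.2 hB₀fin)
          (ENNReal.pow_lt_top (a := 2⁻¹) (n := k) (by simp [ENNReal.inv_lt_top]))
      obtain ⟨C, hc1, hc2, hc3, hc4⟩ := hsplit B h1 h2 h3 hfin
      refine ⟨C, hc1.trans h1, hc2, hc3, ?_⟩
      calc τ C ≤ τ B / 2 := hc4
      _ = τ B * 2⁻¹ := by rw [div_eq_mul_inv]
      _ ≤ (τ B₀ * 2⁻¹ ^ k) * 2⁻¹ := mul_le_mul_left h4 _
      _ = τ B₀ * 2⁻¹ ^ (k + 1) := by rw [mul_assoc, ← pow_succ]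
  -- arbitrarily τ-small subsets of positive ν-measure
  have hsmall : ∀ ε : ℝ≥0∞, ε ≠ 0 → ∃ B, B ⊆ A ∧ MeasurableSet B ∧ 0 < ν B ∧ τ B < ε := by
    intro ε hε
    have h2 : Tendsto (fun k : ℕ => (2⁻¹ : ℝ≥0∞) ^ k) atTop (nhds 0) :=
      ENNReal.tendsto_pow_atTop_nhds_zero_of_lt_one (ENNReal.inv_lt_one.mpr ENNReal.one_lt_two)
    have htend : Tendsto (fun k : ℕ => τ B₀ * 2⁻¹ ^ k) atTop (nhds 0) := by
      simpa using ENNReal.Tendsto.const_mul h2 (Or.inr hB₀fin)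
    obtain ⟨k, hk⟩ := (htend.eventually_lt_const (pos_iff_ne_zero.mpr hε)).exists
    obtain ⟨B, h1, h2', h3, h4⟩ := hseq k
    exact ⟨B, h1, h2', h3, h4.trans_lt hk⟩
  -- the density of ν w.r.t. τ
  set f : X → ℝ≥0∞ := ν.rnDeriv τ with hfdef
  have hfm : Measurable f := Measure.measurable_rnDeriv ν τ
  have hν : τ.withDensity f = ν := Measure.withDensity_rnDeriv_eq ν τ hac₁
  have hint : ∫⁻ x, f x ∂τ = 1 := by
    have := congrArg (fun m : Measure X => m Set.univ) hν
    simpa [withDensity_apply _ MeasurableSet.univ, Measure.restrict_univ] using this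
  have hfin_ae : ∀ᵐ x ∂τ, f x < ∞ := ae_lt_top hfm (by rw [hint]; exact ENNReal.one_ne_top)
  -- tail integrals tend to zero
  have htendδ : Tendsto (fun n : ℕ => ∫⁻ x, (f x - n) ∂τ) atTop (nhds 0) := by
    have h := tendsto_lintegral_of_dominated_convergence (μ := τ)
      (F := fun (n : ℕ) (x : X) => f x - n) (f := fun _ : X => 0) f
      (fun n => hfm.sub measurable_const)
      (fun n => ae_of_all _ fun x => tsub_le_self)
      (by rw [hint]; exact ENNReal.one_ne_top)
      ?_
    · simpa using h
    · filter_upwards [hfin_ae] with x hx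
      obtain ⟨N, hN⟩ := ENNReal.exists_nat_gt hx.ne
      refine tendsto_atTop_of_eventually_const (i₀ := N) fun n hn => ?_
      exact tsub_eq_zero_of_le (hN.le.trans (by exact_mod_cast Nat.cast_le.mpr hn))
  obtain ⟨n, hδ, hn1⟩ :=
    ((htendδ.eventually_lt_const
      (show (0:ℝ≥0∞) < 4⁻¹ from ENNReal.inv_pos.mpr (by simp))).and
      (eventually_ge_atTop 1)).exists
  have hn0 : (n : ℝ≥0∞) ≠ 0 := Nat.cast_ne_zero.mpr (Nat.one_le_iff_ne_zero.mp hn1)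
  -- the small set B
  obtain ⟨B, hBA, hB, hνB, hτB⟩ := hsmall ((4:ℝ≥0∞) * n)⁻¹
    (ENNReal.inv_ne_zero.mpr (ENNReal.mul_ne_top (by simp) (ENNReal.natCast_ne_top n)))
  have hn_mul : (n : ℝ≥0∞) * τ B ≤ 4⁻¹ := by
    calc (n : ℝ≥0∞) * τ B ≤ (n:ℝ≥0∞) * ((4:ℝ≥0∞) * n)⁻¹ := mul_le_mul_right hτB.le _
    _ = 4⁻¹ := by
      rw [ENNReal.mul_inv (Or.inr (ENNReal.natCast_ne_top n)) (Or.inr hn0),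
        mul_comm ((4:ℝ≥0∞)⁻¹) _, ← mul_assoc,
        ENNReal.mul_inv_cancel hn0 (ENNReal.natCast_ne_top n), one_mul]
  -- the test measure
  set lam : Measure X := (ν B)⁻¹ • ν.restrict B with hlamdef
  have hlam_prob : IsProbabilityMeasure lam := by
    constructor
    rw [hlamdef, Measure.smul_apply, Measure.restrict_apply_univ, smul_eq_mul,
      ENNReal.inv_mul_cancel hνB.ne' (measure_ne_top ν B)]
  have hlam_ac : lam ≪ ν := by
    have h1 : ν.restrict B ≪ ν := Measure.absolutelyContinuous_of_le Measure.restrict_le_self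
    intro s hs
    rw [hlamdef, Measure.smul_apply, h1 hs, smul_eq_mul, mul_zero]
  obtain ⟨μ, hμprob, htv⟩ := hSAT lam hlam_prob hlam_ac 4⁻¹ (by norm_num)
  haveI := hμprob
  set m : Measure X := convAct μ ν with hmdef
  have hm_prob : IsProbabilityMeasure m := by
    constructor
    rw [hmdef, convAct, Measure.map_apply hact MeasurableSet.univ, Set.preimage_univ,
      measure_univ]
  haveI := hm_prob
  have hquarter : (4:ℝ≥0∞)⁻¹ + 4⁻¹ = 2⁻¹ := by
    rw [show (4:ℝ≥0∞) = 2 * 2 from by norm_num,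
      ENNReal.mul_inv (Or.inl two_ne_zero) (Or.inl ENNReal.ofNat_ne_top), ← two_mul,
      ← mul_assoc, ENNReal.mul_inv_cancel two_ne_zero ENNReal.ofNat_ne_top, one_mul]
  -- (μ ∗ ν) B is small
  have hmB : m B ≤ 2⁻¹ := by
    have hrep : m B = ∫⁻ g, ν ((fun x => g • x) ⁻¹' B) ∂μ := by
      rw [hmdef, convAct, Measure.map_apply hact hB, Measure.prod_apply (hact hB)]
      rfl
    rw [hrep]
    have hbound : ∀ g : G, ν ((fun x => g • x) ⁻¹' B) ≤ 2⁻¹ := by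
      intro g
      have hg : Measurable (fun x : X => g • x) := hact.comp measurable_prodMk_left
      have hS : MeasurableSet ((fun x => g • x) ⁻¹' B) := hg hB
      have hrep2 : ν ((fun x => g • x) ⁻¹' B) = ∫⁻ x in (fun x => g • x) ⁻¹' B, f x ∂τ := by
        rw [← hν, withDensity_apply _ hS]
      rw [hrep2]
      calc ∫⁻ x in (fun x => g • x) ⁻¹' B, f x ∂τ
          ≤ ∫⁻ x in (fun x => g • x) ⁻¹' B, ((n : ℝ≥0∞) + (f x - n)) ∂τ :=
        lintegral_mono fun x => le_add_tsub
      _ = (n : ℝ≥0∞) * τ ((fun x => g • x) ⁻¹' B)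
          + ∫⁻ x in (fun x => g • x) ⁻¹' B, (f x - n) ∂τ := by
        rw [lintegral_add_left measurable_const, setLIntegral_const]
      _ ≤ (n : ℝ≥0∞) * τ B + ∫⁻ x, (f x - n) ∂τ := by
        rw [hinv g B hB]
        exact add_le_add_right (setLIntegral_le_lintegral _ _) _
      _ ≤ 4⁻¹ + 4⁻¹ := add_le_add hn_mul hδ.le
      _ = 2⁻¹ := hquarter
    calc ∫⁻ g, ν ((fun x => g • x) ⁻¹' B) ∂μ ≤ ∫⁻ _ : G, 2⁻¹ ∂μ := lintegral_mono hbound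
    _ = 2⁻¹ := by rw [lintegral_const, measure_univ, mul_one]
  -- but lam B = 1, contradiction with the TV bound
  have h1 : (lam B).toReal = 1 := by
    rw [hlamdef, Measure.smul_apply, Measure.restrict_apply_self, smul_eq_mul,
      ENNReal.inv_mul_cancel hνB.ne' (measure_ne_top ν B), ENNReal.toReal_one]
  have habs := abs_sub_le_tvDist lam m hB
  have h2 : (m B).toReal ≤ ((2:ℝ≥0∞)⁻¹).toReal :=
    ENNReal.toReal_mono (by simp) hmB
  have h3 : ((2:ℝ≥0∞)⁻¹).toReal = 2⁻¹ := by simp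
  have h4 : 1 - (m B).toReal ≤ |(lam B).toReal - (m B).toReal| := by
    rw [h1]; exact le_abs_self _
  rw [h3] at h2
  have : tvDist lam m < 4⁻¹ := htv
  linarith
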